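/- Let Γ be a nonempty parameter-bounded family of Hénon-form maps. Then there exists R₀ > 1 such that for every R ≥ R₀ and every sequence γ = (γ_j)_{j∈ℤ} with all γ_j ∈ Γ: for every ε > 0 there exists N ∈ ℕ such that for all n ≥ N and all (x,y) in the closure of V_R⁺, writing (x_n, y_n) = γ_{n−1}∘⋯∘γ₀(x,y), one has |y_n| > 1/ε and |x_n| < ε|y_n| (i.e., the forward compositions converge to [0:1:0] ∈ ℙ² uniformly on the closure of V_R⁺); and for every ε > 0 there exists N ∈ ℕ such that for all n ≥ N and all (x,y) in the closure of V_R⁻, writing (x_n', y_n') = γ_n⁻¹∘⋯∘γ₁⁻¹(x,y), one has |x_n'| > 1/ε and |y_n'| < ε|x_n'| (convergence to [1:0:0] uniformly on the closure of V_R⁻). -/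

import Mathlib

open Complex Filter Set Topology MeasureTheory Bornology

noncomputable section

/-- A Hénon-form map `f(x,y) = (y + a, p(y) - δ x)` with `δ ≠ 0` and `deg p ≥ 2`. -/
structure HenonMap : Type where
  a : ℂ
  δ : ℂ
  p : Polynomial ℂ
  hδ : δ ≠ 0
  hdeg : 2 ≤ p.natDegree

namespace HenonMap

/-- The map itself. -/
def toFun (f : HenonMap) (z : ℂ × ℂ) : ℂ × ℂ :=
  (z.2 + f.a, f.p.eval z.2 - f.δ * z.1)

/-- The inverse map `f⁻¹(x,y) = (δ⁻¹ (p(x - a) - y), x - a)`. -/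
def invFun (f : HenonMap) (z : ℂ × ℂ) : ℂ × ℂ :=
  (f.δ⁻¹ * (f.p.eval (z.1 - f.a) - z.2), z.1 - f.a)

end HenonMap

/-- `V_R⁺ = {(x,y) : max(R,|x|) < |y|}`. -/
def VPlus (R : ℝ) : Set (ℂ × ℂ) := {z | max R (‖z.1‖) < ‖z.2‖}

/-- `V_R⁻ = {(x,y) : max(R,|y|) < |x|}`. -/
def VMinus (R : ℝ) : Set (ℂ × ℂ) := {z | max R (‖z.2‖) < ‖z.1‖}

/-- `D_R = {(x,y) : max(|x|,|y|) < R}`. -/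
def DDisk (R : ℝ) : Set (ℂ × ℂ) := {z | max (‖z.1‖) (‖z.2‖) < R}

/-- Condition (A) for `(R, ρ)`. -/
def CondA (f : HenonMap) (R ρ : ℝ) : Prop :=
  (∀ z ∈ closure (VPlus R),
    f.toFun z ∈ VPlus R ∧ ρ * ‖z.2‖ < ‖(f.toFun z).2‖) ∧
  (∀ z ∈ closure (VMinus R),
    f.invFun z ∈ VMinus R ∧ ρ * ‖z.1‖ < ‖(f.invFun z).1‖)

/-- A parameter-bounded family of Hénon-form maps. -/
def ParamBounded (Γ : Set HenonMap) : Prop :=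
  ∃ (D : ℕ) (A d₀ Δ m M : ℝ),
    2 ≤ D ∧ 0 ≤ A ∧ 0 < d₀ ∧ d₀ ≤ Δ ∧ 0 < m ∧ m ≤ M ∧
    ∀ f ∈ Γ,
      f.p.natDegree ≤ D ∧ ‖f.a‖ ≤ A ∧
      d₀ ≤ ‖f.δ‖ ∧ ‖f.δ‖ ≤ Δ ∧
      (∀ i : ℕ, ‖f.p.coeff i‖ ≤ M) ∧
      m ≤ ‖f.p.leadingCoeff‖

/-- Forward composition: `fwd γ n = γ_{n-1} ∘ ⋯ ∘ γ₀`. -/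
def fwd (γ : ℤ → HenonMap) : ℕ → (ℂ × ℂ) → ℂ × ℂ
  | 0 => id
  | n + 1 => fun z => (γ (n : ℤ)).toFun (fwd γ n z)

/-- Backward composition: `bwd γ n = γ_{-n}⁻¹ ∘ ⋯ ∘ γ_{-1}⁻¹`. -/
def bwd (γ : ℤ → HenonMap) : ℕ → (ℂ × ℂ) → ℂ × ℂ
  | 0 => id
  | n + 1 => fun z => (γ (-((n : ℤ) + 1))).invFun (bwd γ n z)

/-- `K_γ⁺` : points with bounded forward orbit. -/
def KPlus (γ : ℤ → HenonMap) : Set (ℂ × ℂ) :=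
  {z | IsBounded (Set.range fun n : ℕ => fwd γ n z)}

/-- `K_γ⁻` : points with bounded backward orbit. -/
def KMinus (γ : ℤ → HenonMap) : Set (ℂ × ℂ) :=
  {z | IsBounded (Set.range fun n : ℕ => bwd γ n z)}

/-- `I_γ⁺` : points whose forward orbit tends to infinity in norm. -/
def IPlus (γ : ℤ → HenonMap) : Set (ℂ × ℂ) :=
  {z | Tendsto (fun n : ℕ => ‖fwd γ n z‖) atTop atTop}

/-- `I_γ⁻` : points whose backward orbit tends to infinity in norm. -/
def IMinus (γ : ℤ → HenonMap) : Set (ℂ × ℂ) :=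
  {z | Tendsto (fun n : ℕ => ‖bwd γ n z‖) atTop atTop}

/-- The iterated shift: `(σⁿ γ)_j = γ_{j+n}`. -/
def shiftIter (γ : ℤ → HenonMap) (n : ℕ) : ℤ → HenonMap := fun j => γ (j + n)

/-- `log⁺ t = max (log t) 0`. -/
def logPlus (t : ℝ) : ℝ := max (Real.log t) 0

/-- `G_{γ,n}⁺(z) = (deg γ_{n-1} ⋯ deg γ₀)⁻¹ log⁺ ‖γ_{n-1} ∘ ⋯ ∘ γ₀ (z)‖`. -/
def GPlusN (γ : ℤ → HenonMap) (n : ℕ) (z : ℂ × ℂ) : ℝ :=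
  (∏ j ∈ Finset.range n, ((γ (j : ℤ)).p.natDegree : ℝ))⁻¹ * logPlus ‖fwd γ n z‖

/-- `G_{γ,n}⁻(z) = (deg γ_{-1} ⋯ deg γ_{-n})⁻¹ log⁺ ‖γ_{-n}⁻¹ ∘ ⋯ ∘ γ_{-1}⁻¹ (z)‖`. -/
def GMinusN (γ : ℤ → HenonMap) (n : ℕ) (z : ℂ × ℂ) : ℝ :=
  (∏ j ∈ Finset.range n, ((γ (-((j : ℤ) + 1))).p.natDegree : ℝ))⁻¹ * logPlus ‖bwd γ n z‖

/-! Outside a large bidisk, every map of a parameter-bounded family sends the closed cone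
`R ≤ |y|, |x| ≤ |y|` into itself, with `|y'| ≥ c |y|²` and `|x'| ≤ (1 + A) |y|` for constants
depending only on the family; the inverse maps do the same on the cone `|y| ≤ |x|` with the
roles of the coordinates swapped. Iterating, the dominant coordinate grows at least like
`2ⁿ R` and the ratio of the coordinates is at most `(1 + A) / (c 2ⁿ⁻¹ R)`, uniformly in the
starting point and in the sequence of maps. -/

theorem Polynomial.norm_mul_sub_le_norm_eval {𝕜 : Type*} [NormedField 𝕜] {p : Polynomial 𝕜}
    {D : ℕ} {m M : ℝ} (hcoeff : ∀ i, ‖p.coeff i‖ ≤ M) (hlead : m ≤ ‖p.leadingCoeff‖)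
    (hdeg : 2 ≤ p.natDegree) (hD : p.natDegree ≤ D) {y : 𝕜} (hy : 1 ≤ ‖y‖)
    (hMD : M * D ≤ m * ‖y‖) :
    ‖y‖ * (m * ‖y‖ - M * D) ≤ ‖p.eval y‖ := by
  set n := p.natDegree
  set t := ‖y‖
  have hM : 0 ≤ M := (norm_nonneg _).trans (hcoeff 0)
  have hlow : m * t ^ n ≤ ‖p.coeff n * y ^ n‖ := by
    rw [norm_mul, norm_pow]
    exact mul_le_mul_of_nonneg_right hlead (by positivity)
  have htail : ‖∑ i ∈ Finset.range n, p.coeff i * y ^ i‖ ≤ n * (M * t ^ (n - 1)) :=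
    calc ‖∑ i ∈ Finset.range n, p.coeff i * y ^ i‖
        ≤ ∑ i ∈ Finset.range n, ‖p.coeff i * y ^ i‖ := norm_sum_le _ _
      _ ≤ ∑ _i ∈ Finset.range n, M * t ^ (n - 1) := by
          refine Finset.sum_le_sum fun i hi => ?_
          rw [norm_mul, norm_pow]
          have : i ≤ n - 1 := by have := Finset.mem_range.mp hi; omega
          exact mul_le_mul (hcoeff i) (pow_le_pow_right₀ hy this) (by positivity) hM
      _ = n * (M * t ^ (n - 1)) := by simp
  have hsplit : p.eval y = p.coeff n * y ^ n + ∑ i ∈ Finset.range n, p.coeff i * y ^ i := by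
    rw [Polynomial.eval_eq_sum_range, Finset.sum_range_succ, add_comm]
  have heval : t ^ (n - 1) * (m * t - M * n) ≤ ‖p.eval y‖ := by
    have hpow : t ^ n = t ^ (n - 1) * t := by rw [← pow_succ]; congr 1; omega
    have := norm_sub_norm_le (p.coeff n * y ^ n) (-∑ i ∈ Finset.range n, p.coeff i * y ^ i)
    rw [sub_neg_eq_add, norm_neg, ← hsplit] at this
    have hexpand : t ^ (n - 1) * (m * t - M * n) = m * t ^ n - n * (M * t ^ (n - 1)) := by
      rw [hpow]; ring
    linarith
  have hnD : M * n ≤ M * D := mul_le_mul_of_nonneg_left (by exact_mod_cast hD) hM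
  calc t * (m * t - M * D) ≤ t ^ (n - 1) * (m * t - M * n) :=
        mul_le_mul (le_self_pow₀ hy (by omega)) (by linarith) (by linarith) (by positivity)
    _ ≤ ‖p.eval y‖ := heval

theorem Polynomial.mul_sq_le_norm_eval_sub {𝕜 : Type*} [NormedField 𝕜] {p : Polynomial 𝕜}
    {D : ℕ} {m M B R s : ℝ} (hcoeff : ∀ i, ‖p.coeff i‖ ≤ M) (hlead : m ≤ ‖p.leadingCoeff‖)
    (hdeg : 2 ≤ p.natDegree) (hD : p.natDegree ≤ D) (hR : 2 ≤ R)
    (hmR : 4 * M * D + 8 * B ≤ m * R) (hRs : R ≤ s) {w v : 𝕜} (hw : s / 2 ≤ ‖w‖)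
    (hv : ‖v‖ ≤ B * s) :
    m / 8 * s ^ 2 ≤ ‖p.eval w - v‖ := by
  have hM : 0 ≤ M := (norm_nonneg _).trans (hcoeff 0)
  have hMD : 0 ≤ M * D := by positivity
  have hB : 0 ≤ B := nonneg_of_mul_nonneg_left ((norm_nonneg v).trans hv) (by linarith)
  have hm : 0 ≤ m := nonneg_of_mul_nonneg_left (b := R) (by linarith) (by linarith)
  have hms : m * R ≤ m * s := mul_le_mul_of_nonneg_left hRs hm
  have hmw : m * (s / 2) ≤ m * ‖w‖ := mul_le_mul_of_nonneg_left hw hm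
  have hpoly := p.norm_mul_sub_le_norm_eval hcoeff hlead hdeg hD (y := w) (by linarith)
    (by linarith)
  have hmono : s / 2 * (m * (s / 2) - M * D) ≤ ‖w‖ * (m * ‖w‖ - M * D) :=
    mul_le_mul hw (by linarith) (by linarith) (by linarith)
  nlinarith [norm_sub_norm_le (p.eval w) v]

theorem closure_VPlus_subset (R : ℝ) :
    closure (VPlus R) ⊆ {z | R ≤ ‖z.2‖ ∧ ‖z.1‖ ≤ ‖z.2‖} := by
  refine closure_minimal (fun z hz => (max_lt_iff.1 hz).imp le_of_lt le_of_lt) ?_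
  exact (isClosed_le continuous_const continuous_snd.norm).inter
    (isClosed_le continuous_fst.norm continuous_snd.norm)

theorem closure_VMinus_subset (R : ℝ) :
    closure (VMinus R) ⊆ {z | R ≤ ‖z.1‖ ∧ ‖z.2‖ ≤ ‖z.1‖} := by
  refine closure_minimal (fun z hz => (max_lt_iff.1 hz).imp le_of_lt le_of_lt) ?_
  exact (isClosed_le continuous_const continuous_fst.norm).inter
    (isClosed_le continuous_snd.norm continuous_fst.norm)

namespace HenonMap

structure Bounds (f : HenonMap) (D : ℕ) (A Δ m M : ℝ) : Prop where
  natDegree_le : f.p.natDegree ≤ D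
  norm_a_le : ‖f.a‖ ≤ A
  norm_δ_le : ‖f.δ‖ ≤ Δ
  norm_coeff_le : ∀ i, ‖f.p.coeff i‖ ≤ M
  le_norm_leadingCoeff : m ≤ ‖f.p.leadingCoeff‖

variable {f : HenonMap} {D : ℕ} {A Δ m M R : ℝ} {z : ℂ × ℂ}

theorem Bounds.toFun_growth (hf : f.Bounds D A Δ m M) (hR : 2 ≤ R)
    (hmR : 4 * M * D + 8 * Δ ≤ m * R) (hz₂ : R ≤ ‖z.2‖) (hz₁ : ‖z.1‖ ≤ ‖z.2‖) :
    ‖(f.toFun z).1‖ ≤ (1 + A) * ‖z.2‖ ∧ m / 8 * ‖z.2‖ ^ 2 ≤ ‖(f.toFun z).2‖ := by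
  constructor
  · calc ‖z.2 + f.a‖ ≤ ‖z.2‖ + A := (norm_add_le _ _).trans (by linarith [hf.norm_a_le])
      _ ≤ (1 + A) * ‖z.2‖ := by nlinarith [(norm_nonneg f.a).trans hf.norm_a_le]
  · refine f.p.mul_sq_le_norm_eval_sub hf.norm_coeff_le hf.le_norm_leadingCoeff f.hdeg
      hf.natDegree_le hR hmR hz₂ (by linarith) ?_
    rw [norm_mul]
    exact mul_le_mul hf.norm_δ_le hz₁ (norm_nonneg _) ((norm_nonneg _).trans hf.norm_δ_le)

theorem Bounds.invFun_growth (hf : f.Bounds D A Δ m M) (hR : 2 ≤ R) (hAR : 2 * A ≤ R)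
    (hmR : 4 * M * D + 8 ≤ m * R) (hz₁ : R ≤ ‖z.1‖) (hz₂ : ‖z.2‖ ≤ ‖z.1‖) :
    ‖(f.invFun z).2‖ ≤ (1 + A) * ‖z.1‖ ∧ m / (8 * Δ) * ‖z.1‖ ^ 2 ≤ ‖(f.invFun z).1‖ := by
  have hδ : 0 < ‖f.δ‖ := norm_pos_iff.2 f.hδ
  have hw : ‖z.1‖ / 2 ≤ ‖z.1 - f.a‖ := by linarith [norm_sub_norm_le z.1 f.a, hf.norm_a_le]
  have hquad := f.p.mul_sq_le_norm_eval_sub hf.norm_coeff_le hf.le_norm_leadingCoeff f.hdeg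
    hf.natDegree_le (B := 1) (v := z.2) hR (by linarith) hz₁ hw (by linarith)
  constructor
  · calc ‖z.1 - f.a‖ ≤ ‖z.1‖ + A := (norm_sub_le _ _).trans (by linarith [hf.norm_a_le])
      _ ≤ (1 + A) * ‖z.1‖ := by nlinarith [(norm_nonneg f.a).trans hf.norm_a_le]
  · calc m / (8 * Δ) * ‖z.1‖ ^ 2 = m / 8 * ‖z.1‖ ^ 2 * Δ⁻¹ := by ring
      _ ≤ ‖f.p.eval (z.1 - f.a) - z.2‖ * ‖f.δ‖⁻¹ :=
        mul_le_mul hquad (inv_anti₀ hδ hf.norm_δ_le) (inv_nonneg.2 (hδ.le.trans hf.norm_δ_le))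
          (norm_nonneg _)
      _ = ‖(f.invFun z).1‖ := by rw [invFun, norm_mul, norm_inv, mul_comm]

end HenonMap

theorem ParamBounded.exists_bounds {Γ : Set HenonMap} (hΓ : ParamBounded Γ) :
    ∃ (D : ℕ) (A Δ m M : ℝ), 0 ≤ A ∧ 0 < Δ ∧ 0 < m ∧ 0 ≤ M ∧ ∀ f ∈ Γ, f.Bounds D A Δ m M := by
  obtain ⟨D, A, d₀, Δ, m, M, -, hA, hd₀, hd₀Δ, hm, hmM, hΓ⟩ := hΓ
  refine ⟨D, A, Δ, m, M, hA, hd₀.trans_le hd₀Δ, hm, hm.le.trans hmM, fun f hf => ?_⟩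
  obtain ⟨hD, ha, -, hδ, hcoeff, hlead⟩ := hΓ f hf
  exact ⟨hD, ha, hδ, hcoeff, hlead⟩

/-- `a` and `b` stand for the norms of the dominant and the other coordinate along an orbit. -/
def SqGrowth (K c R₀ : ℝ) (a b : ℕ → ℝ) : Prop :=
  ∀ n, R₀ ≤ a n → b n ≤ a n → b (n + 1) ≤ K * a n ∧ c * a n ^ 2 ≤ a (n + 1)

section SqGrowth

variable {K c R₀ : ℝ}

theorem SqGrowth.two_pow_mul_le {a b : ℕ → ℝ} (h : SqGrowth K c R₀ a b) (hK : 1 ≤ K)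
    (hc : 0 < c) (hKc : 2 * K ≤ c * R₀) (ha₀ : R₀ ≤ a 0) (hb₀ : b 0 ≤ a 0) (n : ℕ) :
    2 ^ n * R₀ ≤ a n ∧ b n ≤ a n := by
  have hR₀ : 0 < R₀ := pos_of_mul_pos_right (by linarith) hc.le
  induction n with
  | zero => simpa using ⟨ha₀, hb₀⟩
  | succ k ih =>
    have hak : R₀ ≤ a k := le_trans (le_mul_of_one_le_left hR₀.le (one_le_pow₀ one_le_two)) ih.1
    obtain ⟨hb, ha⟩ := h k hak ih.2
    have hdouble : 2 * K * a k ≤ a (k + 1) :=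
      calc 2 * K * a k ≤ c * R₀ * a k := mul_le_mul_of_nonneg_right hKc (by linarith)
        _ ≤ c * a k * a k :=
          mul_le_mul_of_nonneg_right (mul_le_mul_of_nonneg_left hak hc.le) (by linarith)
        _ = c * a k ^ 2 := by ring
        _ ≤ a (k + 1) := ha
    have hKa : a k ≤ K * a k := le_mul_of_one_le_left (by linarith) hK
    constructor
    · rw [pow_succ]; linarith [ih.1]
    · linarith

theorem SqGrowth.exists_uniform_escape (hK : 1 ≤ K) (hc : 0 < c) (hKc : 2 * K ≤ c * R₀) {ε : ℝ}
    (hε : 0 < ε) :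
    ∃ N : ℕ, ∀ a b : ℕ → ℝ, SqGrowth K c R₀ a b → R₀ ≤ a 0 → b 0 ≤ a 0 →
      ∀ n, N ≤ n → 1 / ε < a n ∧ b n < ε * a n := by
  have hR₀ : 0 < R₀ := pos_of_mul_pos_right (by linarith) hc.le
  obtain ⟨N, hN⟩ := pow_unbounded_of_one_lt (max (1 / (ε * R₀)) (K / (ε * c * R₀))) one_lt_two
  refine ⟨N + 1, fun a b h ha₀ hb₀ n hn => ?_⟩
  obtain ⟨k, rfl⟩ : ∃ k, n = k + 1 := ⟨n - 1, by omega⟩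
  have h2k : max (1 / (ε * R₀)) (K / (ε * c * R₀)) < 2 ^ k :=
    hN.trans_le (pow_le_pow_right₀ one_le_two (by omega))
  have hεR : 1 < ε * (2 ^ k * R₀) := by
    have := (div_lt_iff₀ (by positivity)).1 ((le_max_left _ _).trans_lt h2k); linarith
  have hK2k : K < ε * c * (2 ^ k * R₀) := by
    have := (div_lt_iff₀ (by positivity)).1 ((le_max_right _ _).trans_lt h2k); linarith
  obtain ⟨hak, hbk⟩ := h.two_pow_mul_le hK hc hKc ha₀ hb₀ k
  have hR₀k : R₀ ≤ 2 ^ k * R₀ := le_mul_of_one_le_left hR₀.le (one_le_pow₀ one_le_two)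
  obtain ⟨hb, ha⟩ := h k (hR₀k.trans hak) hbk
  have hak₀ : 0 < a k := by linarith
  constructor
  · rw [div_lt_iff₀ hε]
    have := (h.two_pow_mul_le hK hc hKc ha₀ hb₀ (k + 1)).1
    rw [pow_succ] at this
    nlinarith
  · calc b (k + 1) ≤ K * a k := hb
      _ < ε * c * (2 ^ k * R₀) * a k := mul_lt_mul_of_pos_right hK2k hak₀
      _ ≤ ε * c * a k * a k := by gcongr
      _ = ε * (c * a k ^ 2) := by ring
      _ ≤ ε * a (k + 1) := mul_le_mul_of_nonneg_left ha hε.le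

end SqGrowth

theorem stmt_4_general (Γ : Set HenonMap) (hΓ : ParamBounded Γ) :
    ∃ R₀ : ℝ, 1 < R₀ ∧ ∀ R : ℝ, R₀ ≤ R →
      ∀ γ : ℤ → HenonMap, (∀ j : ℤ, γ j ∈ Γ) →
        (∀ ε : ℝ, 0 < ε → ∃ N : ℕ, ∀ n : ℕ, N ≤ n → ∀ z ∈ closure (VPlus R),
          1 / ε < ‖(fwd γ n z).2‖ ∧
          ‖(fwd γ n z).1‖ < ε * ‖(fwd γ n z).2‖) ∧
        (∀ ε : ℝ, 0 < ε → ∃ N : ℕ, ∀ n : ℕ, N ≤ n → ∀ z ∈ closure (VMinus R),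
          1 / ε < ‖(bwd γ n z).1‖ ∧
          ‖(bwd γ n z).2‖ < ε * ‖(bwd γ n z).1‖) := by
  obtain ⟨D, A, Δ, m, M, hA, hΔ, hm, hM, hbounds⟩ := hΓ.exists_bounds
  have hMD : 0 ≤ M * D := by positivity
  set K := 1 + A
  -- each summand of `X` is one of the lower bounds on `m * R` that the growth lemmas need
  set X := 4 * M * D + 8 * Δ + 8 + 16 * K + 16 * K * Δ
  set R₀ := max (2 + 2 * A) (X / m)
  have hR₀ : 2 + 2 * A ≤ R₀ := le_max_left _ _
  have hmR₀ : X ≤ m * R₀ := (div_le_iff₀' hm).1 (le_max_right _ _)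
  have hKΔ : 0 ≤ K * Δ := by positivity
  refine ⟨R₀, by linarith, fun R hR γ hγ => ⟨fun ε hε => ?_, fun ε hε => ?_⟩⟩
  · have hKc : 2 * K ≤ m / 8 * R₀ := by linarith
    obtain ⟨N, hN⟩ := SqGrowth.exists_uniform_escape (by linarith) (by positivity) hKc hε
    refine ⟨N, fun n hn z hz =>
      hN (fun k => ‖(fwd γ k z).2‖) (fun k => ‖(fwd γ k z).1‖) (fun k hk hk' => ?_) ?_ ?_ n hn⟩
    · exact (hbounds _ (hγ k)).toFun_growth (by linarith) (by linarith) hk hk'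
    · exact (closure_VPlus_subset R hz).1.trans' hR
    · exact (closure_VPlus_subset R hz).2
  · have hKc : 2 * K ≤ m / (8 * Δ) * R₀ := by
      rw [div_mul_eq_mul_div, le_div_iff₀ (by positivity)]
      linarith
    obtain ⟨N, hN⟩ := SqGrowth.exists_uniform_escape (by linarith) (by positivity) hKc hε
    refine ⟨N, fun n hn z hz =>
      hN (fun k => ‖(bwd γ k z).1‖) (fun k => ‖(bwd γ k z).2‖) (fun k hk hk' => ?_) ?_ ?_ n hn⟩
    · exact (hbounds _ (hγ _)).invFun_growth (by linarith) (by linarith) (by linarith) hk hk'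
    · exact (closure_VMinus_subset R hz).1.trans' hR
    · exact (closure_VMinus_subset R hz).2

/-- uniform convergence of forward compositions to `[0:1:0]` on the closure
of `V_R⁺`, and of backward compositions to `[1:0:0]` on the closure of `V_R⁻`. -/
theorem stmt_4 (Γ : Set HenonMap) (hne : Γ.Nonempty) (hΓ : ParamBounded Γ) :
    ∃ R₀ : ℝ, 1 < R₀ ∧ ∀ R : ℝ, R₀ ≤ R →
      ∀ γ : ℤ → HenonMap, (∀ j : ℤ, γ j ∈ Γ) →
        (∀ ε : ℝ, 0 < ε → ∃ N : ℕ, ∀ n : ℕ, N ≤ n → ∀ z ∈ closure (VPlus R),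
          1 / ε < ‖(fwd γ n z).2‖ ∧
          ‖(fwd γ n z).1‖ < ε * ‖(fwd γ n z).2‖) ∧
        (∀ ε : ℝ, 0 < ε → ∃ N : ℕ, ∀ n : ℕ, N ≤ n → ∀ z ∈ closure (VMinus R),
          1 / ε < ‖(bwd γ n z).1‖ ∧
          ‖(bwd γ n z).2‖ < ε * ‖(bwd γ n z).1‖) :=
  stmt_4_general Γ hΓ
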